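/- Let L be a nondegenerate E-lattice with L = θL' and let ρ ∈ L be a primitive null vector. Then there exists w ∈ L with ⟨ρ,w⟩ = θ and ⟨w,w⟩ = 0, and span_E(ρ,w) is an orthogonal direct summand of L isometric to E² with Gram matrix [[0,θ],[θ̄,0]]. -/

import Mathlib

noncomputable section

def ω : ℂ := -1/2 + (Real.sqrt 3 / 2) * Complex.I
def θ : ℂ := ω - (starRingEnd ℂ) ω
def Eis : Subring ℂ := Subring.closure {ω}

/-!
Since `L = θL'`, the values `⟨x, ρ⟩` for `x ∈ L` form `θ I` for an ideal `I` of the Euclidean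
ring `ℤ[ω]`. If `I = (δ)`, then `ρ / conj δ ∈ θL' = L`, so primitivity makes `δ` a unit, and some
`w₁ ∈ L` has `⟨ρ, w₁⟩ = θ`. Its norm `⟨w₁, w₁⟩` is real and lies in `θ ℤ[ω]`, so it equals `a θ²`
with `a ∈ ℤ`, and `w = w₁ - a ω ρ` is isotropic. Finally `x ∈ L` splits as
`x = (⟨x, w⟩ / θ) ρ - (⟨x, ρ⟩ / θ) w + z` with `z` orthogonal to `ρ` and `w`, and both
coefficients lie in `ℤ[ω]`.
-/

open Complex ComplexConjugate

theorem ω_re : ω.re = -1/2 := by simp [ω]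

theorem ω_im : ω.im = Real.sqrt 3 / 2 := by simp [ω]

theorem ω_mul_ω : ω * ω = -1 - ω := by
  have h3 : Real.sqrt 3 * Real.sqrt 3 = 3 := Real.mul_self_sqrt (by norm_num)
  apply Complex.ext
  · simp only [mul_re, ω_re, ω_im, sub_re, neg_re, one_re]; linear_combination (-1 / 4 : ℝ) * h3
  · simp only [mul_im, ω_re, ω_im, sub_im, neg_im, one_im]; ring

theorem conj_ω : conj ω = -1 - ω := by
  apply Complex.ext
  · simp only [conj_re, ω_re, sub_re, neg_re, one_re]; norm_num
  · simp only [conj_im, ω_im, sub_im, neg_im, one_im]; ring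

theorem θ_eq : θ = 1 + 2 * ω := by
  rw [θ, conj_ω]; ring

theorem conj_θ : conj θ = -θ := by
  rw [θ, map_sub, conj_conj]; ring

theorem θ_ne_zero : θ ≠ 0 := by
  intro h
  have him := congrArg Complex.im (θ_eq ▸ h)
  simp [ω_im] at him

theorem ω_mem_Eis : ω ∈ Eis := Subring.subset_closure rfl

theorem mem_Eis_iff {z : ℂ} : z ∈ Eis ↔ ∃ a b : ℤ, z = a + b * ω := by
  constructor
  · intro hz
    induction hz using Subring.closure_induction with
    | mem x hx => exact ⟨0, 1, by simp [Set.mem_singleton_iff.mp hx]⟩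
    | zero => exact ⟨0, 0, by simp⟩
    | one => exact ⟨1, 0, by simp⟩
    | add x y _ _ ihx ihy =>
      obtain ⟨a, b, rfl⟩ := ihx
      obtain ⟨c, d, rfl⟩ := ihy
      exact ⟨a + c, b + d, by push_cast; ring⟩
    | neg x _ ihx =>
      obtain ⟨a, b, rfl⟩ := ihx
      exact ⟨-a, -b, by push_cast; ring⟩
    | mul x y _ _ ihx ihy =>
      obtain ⟨a, b, rfl⟩ := ihx
      obtain ⟨c, d, rfl⟩ := ihy
      exact ⟨a * c - b * d, a * d + b * c - b * d, by
        push_cast; linear_combination (b * d : ℂ) * ω_mul_ω⟩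
  · rintro ⟨a, b, rfl⟩
    exact add_mem (intCast_mem Eis a) (mul_mem (intCast_mem Eis b) ω_mem_Eis)

theorem conj_mem_Eis {z : ℂ} (hz : z ∈ Eis) : conj z ∈ Eis := by
  obtain ⟨a, b, rfl⟩ := mem_Eis_iff.mp hz
  refine mem_Eis_iff.mpr ⟨a - b, -b, ?_⟩
  simp only [map_add, map_mul, map_intCast, conj_ω]
  push_cast; ring

theorem exists_normSq_eq_natCast_of_mem_Eis {z : ℂ} (hz : z ∈ Eis) :
    ∃ n : ℕ, normSq z = n := by
  obtain ⟨a, b, rfl⟩ := mem_Eis_iff.mp hz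
  have h3 : Real.sqrt 3 * Real.sqrt 3 = 3 := Real.mul_self_sqrt (by norm_num)
  have hnorm : normSq ((a : ℂ) + b * ω) = ((a ^ 2 - a * b + b ^ 2 : ℤ) : ℝ) := by
    simp only [normSq_apply, add_re, add_im, mul_re, mul_im, intCast_re, intCast_im, ω_re, ω_im]
    push_cast; linear_combination (b ^ 2 / 4 : ℝ) * h3
  have hnn : 0 ≤ a ^ 2 - a * b + b ^ 2 := by nlinarith [sq_nonneg (a - b)]
  exact ⟨(a ^ 2 - a * b + b ^ 2).toNat, by rw [hnorm]; exact_mod_cast (Int.toNat_of_nonneg hnn).symm⟩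

/-- `ℤ[ω]` is norm-Euclidean: round the coordinates of `z` in the basis `1, ω`. -/
theorem exists_mem_Eis_normSq_sub_lt_one (z : ℂ) : ∃ q ∈ Eis, normSq (z - q) < 1 := by
  have h3 : Real.sqrt 3 * Real.sqrt 3 = 3 := Real.mul_self_sqrt (by norm_num)
  set b : ℤ := round (z.im * 2 / Real.sqrt 3)
  set a : ℤ := round (z.re + b / 2)
  refine ⟨a + b * ω, mem_Eis_iff.mpr ⟨a, b, rfl⟩, ?_⟩
  set r : ℝ := z.re + b / 2 - a
  set u : ℝ := z.im * 2 / Real.sqrt 3 - b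
  have hr : |r| ≤ 1 / 2 := abs_sub_round _
  have hu : |u| ≤ 1 / 2 := abs_sub_round _
  have hre : (z - (a + b * ω)).re = r := by
    simp only [sub_re, add_re, intCast_re, mul_re, ω_re, intCast_im, ω_im, r]; ring
  have him : (z - (a + b * ω)).im = u * (Real.sqrt 3 / 2) := by
    simp only [sub_im, add_im, intCast_im, mul_im, intCast_re, ω_im, ω_re, u]
    field_simp; ring
  have hr2 : r ^ 2 ≤ 1 / 4 := by nlinarith [abs_le.mp hr]
  have hu2 : u ^ 2 ≤ 1 / 4 := by nlinarith [abs_le.mp hu]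
  rw [normSq_apply, hre, him]
  nlinarith

/-- `J` is a nonzero ideal of `ℤ[ω]`; an element of least nonzero norm generates it. -/
theorem exists_generator_of_subset_Eis {J : Set ℂ} (hJ : J ⊆ Eis)
    (hsub : ∀ a ∈ J, ∀ b ∈ J, a - b ∈ J) (hmul : ∀ q ∈ Eis, ∀ a ∈ J, q * a ∈ J)
    (hne : ∃ d ∈ J, d ≠ 0) : ∃ δ ∈ J, δ ≠ 0 ∧ ∀ d ∈ J, ∃ q ∈ Eis, d = q * δ := by
  classical
  have hP : ∃ n : ℕ, ∃ d ∈ J, d ≠ 0 ∧ normSq d = n := by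
    obtain ⟨d, hd, hd0⟩ := hne
    obtain ⟨n, hn⟩ := exists_normSq_eq_natCast_of_mem_Eis (hJ hd)
    exact ⟨n, d, hd, hd0, hn⟩
  obtain ⟨δ, hδ, hδ0, hδn⟩ := Nat.find_spec hP
  refine ⟨δ, hδ, hδ0, fun d hd => ?_⟩
  obtain ⟨q, hq, hlt⟩ := exists_mem_Eis_normSq_sub_lt_one (d / δ)
  refine ⟨q, hq, ?_⟩
  by_contra hne
  have hrJ : d - q * δ ∈ J := hsub d hd _ (hmul q hq δ hδ)
  obtain ⟨m, hm⟩ := exists_normSq_eq_natCast_of_mem_Eis (hJ hrJ)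
  have hsmaller : normSq (d - q * δ) < normSq δ := by
    calc normSq (d - q * δ) = normSq δ * normSq (d / δ - q) := by
          rw [← normSq_mul]; congr 1; field_simp
      _ < normSq δ * 1 := mul_lt_mul_of_pos_left hlt (normSq_pos.mpr hδ0)
      _ = normSq δ := mul_one _
  rw [hm, hδn] at hsmaller
  exact Nat.find_min hP (by exact_mod_cast hsmaller) ⟨d - q * δ, hrJ, sub_ne_zero.mpr hne, hm⟩

theorem exists_intCast_mul_θ_of_conj_eq_neg {e : ℂ} (he : e ∈ Eis) (hconj : conj e = -e) :
    ∃ a : ℤ, e = a * θ := by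
  obtain ⟨a, b, rfl⟩ := mem_Eis_iff.mp he
  have hre := congrArg Complex.re hconj
  simp only [conj_re, neg_re, add_re, mul_re, intCast_re, intCast_im, ω_re, ω_im] at hre
  have hb : (b : ℂ) = 2 * a := by exact_mod_cast (by linarith : (b : ℝ) = 2 * a)
  exact ⟨a, by rw [hb, θ_eq]; ring⟩

section Lattice

variable {V : Type*} [AddCommGroup V] [Module ℂ V]

structure IsHermitianForm (B : V → V → ℂ) : Prop where
  add_left : ∀ x y z : V, B (x + y) z = B x z + B y z
  smul_left : ∀ (c : ℂ) (x y : V), B (c • x) y = c * B x y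
  conj_symm : ∀ x y : V, B y x = conj (B x y)

structure IsEisModule (L : Set V) : Prop where
  zero_mem : (0 : V) ∈ L
  add_mem : ∀ x ∈ L, ∀ y ∈ L, x + y ∈ L
  neg_mem : ∀ x ∈ L, -x ∈ L
  ω_smul_mem : ∀ x ∈ L, ω • x ∈ L

variable {B : V → V → ℂ} {L : Set V}

namespace IsHermitianForm

theorem add_right (hB : IsHermitianForm B) (x y z : V) : B x (y + z) = B x y + B x z := by
  rw [hB.conj_symm, hB.add_left, map_add, ← hB.conj_symm, ← hB.conj_symm]

theorem smul_right (hB : IsHermitianForm B) (c : ℂ) (x y : V) :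
    B x (c • y) = conj c * B x y := by
  rw [hB.conj_symm, hB.smul_left, map_mul, ← hB.conj_symm]

theorem sub_left (hB : IsHermitianForm B) (x y z : V) : B (x - y) z = B x z - B y z := by
  rw [sub_eq_add_neg, ← neg_one_smul ℂ y, hB.add_left, hB.smul_left]; ring

end IsHermitianForm

namespace IsEisModule

theorem sub_mem (hL : IsEisModule L) {x y : V} (hx : x ∈ L) (hy : y ∈ L) : x - y ∈ L := by
  rw [sub_eq_add_neg]; exact hL.add_mem x hx _ (hL.neg_mem y hy)

theorem smul_mem (hL : IsEisModule L) {c : ℂ} (hc : c ∈ Eis) {x : V} (hx : x ∈ L) :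
    c • x ∈ L := by
  induction hc using Subring.closure_induction generalizing x with
  | mem d hd => rw [Set.mem_singleton_iff.mp hd]; exact hL.ω_smul_mem x hx
  | zero => rw [zero_smul]; exact hL.zero_mem
  | one => rwa [one_smul]
  | add d e _ _ ihd ihe => rw [add_smul]; exact hL.add_mem _ (ihd hx) _ (ihe hx)
  | neg d _ ihd => rw [neg_smul]; exact hL.neg_mem _ (ihd hx)
  | mul d e _ _ ihd ihe => rw [mul_smul]; exact ihd (ihe hx)

end IsEisModule

variable (hdual : L = {z | ∃ v : V, (∀ x ∈ L, B x v ∈ Eis) ∧ z = θ • v})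
include hdual

theorem exists_B_eq_θ_mul (hB : IsHermitianForm B) {x y : V} (hx : x ∈ L) (hy : y ∈ L) :
    ∃ e ∈ Eis, B x y = θ * e := by
  rw [hdual] at hy
  obtain ⟨v, hv, rfl⟩ := hy
  exact ⟨-B x v, neg_mem (hv x hx), by rw [hB.smul_right, conj_θ]; ring⟩

theorem θ_smul_mem {v : V} (hv : ∀ x ∈ L, B x v ∈ Eis) : θ • v ∈ L := by
  rw [hdual]; exact ⟨v, hv, rfl⟩

variable {ρ : V}

theorem exists_generator_B_left (hB : IsHermitianForm B) (hL : IsEisModule L)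
    (hnd : ∀ v : V, (∀ x ∈ L, B x v = 0) → v = 0) (hρ : ρ ∈ L) (hρ0 : ρ ≠ 0) :
    ∃ δ ∈ Eis, δ ≠ 0 ∧ (∃ x₀ ∈ L, B x₀ ρ = θ * δ) ∧
      ∀ x ∈ L, ∃ q ∈ Eis, B x ρ = θ * (q * δ) := by
  set J : Set ℂ := {d | ∃ x ∈ L, B x ρ = θ * d}
  have hJ : J ⊆ Eis := by
    rintro d ⟨x, hx, hxd⟩
    obtain ⟨e, he, hxe⟩ := exists_B_eq_θ_mul hdual hB hx hρ
    rwa [mul_left_cancel₀ θ_ne_zero (hxd.symm.trans hxe)]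
  have hsub : ∀ a ∈ J, ∀ b ∈ J, a - b ∈ J := by
    rintro a ⟨x, hx, hxa⟩ b ⟨y, hy, hyb⟩
    exact ⟨x - y, hL.sub_mem hx hy, by rw [hB.sub_left, hxa, hyb]; ring⟩
  have hmul : ∀ q ∈ Eis, ∀ a ∈ J, q * a ∈ J := by
    rintro q hq a ⟨x, hx, hxa⟩
    exact ⟨q • x, hL.smul_mem hq hx, by rw [hB.smul_left, hxa]; ring⟩
  have hne : ∃ d ∈ J, d ≠ 0 := by
    by_contra! hJ0
    refine hρ0 (hnd ρ fun x hx => ?_)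
    obtain ⟨e, -, hxe⟩ := exists_B_eq_θ_mul hdual hB hx hρ
    rw [hxe, hJ0 e ⟨x, hx, hxe⟩, mul_zero]
  obtain ⟨δ, hδ, hδ0, hgen⟩ := exists_generator_of_subset_Eis hJ hsub hmul hne
  refine ⟨δ, hJ hδ, hδ0, hδ, fun x hx => ?_⟩
  obtain ⟨e, -, hxe⟩ := exists_B_eq_θ_mul hdual hB hx hρ
  obtain ⟨q, hq, rfl⟩ := hgen e ⟨x, hx, hxe⟩
  exact ⟨q, hq, hxe⟩

/-- If `⟨L, ρ⟩ ⊆ θ δ ℤ[ω]`, then `ρ / conj δ` lies in `L`, so primitivity forces `conj δ` to be a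
unit. -/
theorem exists_conj_mul_eq_one (hB : IsHermitianForm B)
    (hprim : ∀ α ∈ Eis, ∀ v ∈ L, ρ = α • v → ∃ β ∈ Eis, α * β = 1) {δ : ℂ} (hδ : δ ∈ Eis)
    (hδ0 : δ ≠ 0) (hdiv : ∀ x ∈ L, ∃ q ∈ Eis, B x ρ = θ * (q * δ)) :
    ∃ β ∈ Eis, conj δ * β = 1 := by
  have hθδ : θ * conj δ ≠ 0 := mul_ne_zero θ_ne_zero ((map_ne_zero _).mpr hδ0)
  set u : V := (θ * conj δ)⁻¹ • ρ
  have hu : ∀ x ∈ L, B x u ∈ Eis := by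
    intro x hx
    obtain ⟨q, hq, hxq⟩ := hdiv x hx
    have hxu : B x u = -q := by
      rw [hB.smul_right, map_inv₀, map_mul, conj_θ, conj_conj, hxq]
      field_simp [θ_ne_zero]
    rw [hxu]; exact neg_mem hq
  refine hprim _ (conj_mem_Eis hδ) _ (θ_smul_mem hdual hu) ?_
  rw [smul_smul, smul_smul, mul_comm (conj δ) θ, mul_inv_cancel₀ hθδ, one_smul]

theorem exists_B_eq_θ (hB : IsHermitianForm B) (hL : IsEisModule L)
    (hnd : ∀ v : V, (∀ x ∈ L, B x v = 0) → v = 0) (hρ : ρ ∈ L)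
    (hprim : ∀ α ∈ Eis, ∀ v ∈ L, ρ = α • v → ∃ β ∈ Eis, α * β = 1) :
    ∃ w ∈ L, B ρ w = θ := by
  have hρ0 : ρ ≠ 0 := by
    rintro rfl
    obtain ⟨β, -, h⟩ := hprim 0 (zero_mem Eis) 0 hL.zero_mem (smul_zero 0).symm
    simp at h
  obtain ⟨δ, hδ, hδ0, ⟨x₀, hx₀, hx₀ρ⟩, hdiv⟩ := exists_generator_B_left hdual hB hL hnd hρ hρ0
  obtain ⟨β, hβ, hδβ⟩ := exists_conj_mul_eq_one hdual hB hprim hδ hδ0 hdiv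
  refine ⟨(-conj β) • x₀, hL.smul_mem (neg_mem (conj_mem_Eis hβ)) hx₀, ?_⟩
  have hδβ' : δ * conj β = 1 := by simpa using congrArg conj hδβ
  have hwρ : B ((-conj β) • x₀) ρ = -θ := by
    rw [hB.smul_left, hx₀ρ]; linear_combination (-θ) * hδβ'
  rw [hB.conj_symm, hwρ, map_neg, conj_θ, neg_neg]

theorem exists_isotropic_B_eq_θ (hB : IsHermitianForm B) (hL : IsEisModule L) (hρ : ρ ∈ L)
    (hnull : B ρ ρ = 0) {w₁ : V} (hw₁ : w₁ ∈ L) (hρw₁ : B ρ w₁ = θ) :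
    ∃ w ∈ L, B ρ w = θ ∧ B w w = 0 := by
  obtain ⟨e, he, hw₁w₁⟩ := exists_B_eq_θ_mul hdual hB hw₁ hw₁
  have hconj : conj e = -e := by
    have h := hB.conj_symm w₁ w₁
    rw [hw₁w₁, map_mul, conj_θ] at h
    exact mul_left_cancel₀ θ_ne_zero (by linear_combination h)
  obtain ⟨a, rfl⟩ := exists_intCast_mul_θ_of_conj_eq_neg he hconj
  have hw₁ρ : B w₁ ρ = -θ := by rw [hB.conj_symm, hρw₁, conj_θ]
  have ht : -((a : ℂ) * ω) ∈ Eis := neg_mem (mul_mem (intCast_mem Eis a) ω_mem_Eis)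
  refine ⟨w₁ + (-((a : ℂ) * ω)) • ρ, hL.add_mem _ hw₁ _ (hL.smul_mem ht hρ), ?_, ?_⟩
  · rw [hB.add_right, hB.smul_right, hρw₁, hnull, mul_zero, add_zero]
  · simp only [hB.add_left, hB.add_right, hB.smul_left, hB.smul_right, hw₁w₁, hw₁ρ, hρw₁,
      hnull, map_neg, map_mul, map_intCast, conj_ω]
    linear_combination ((a : ℂ) * θ) * θ_eq

theorem exists_eq_smul_add_smul_add_orthogonal (hB : IsHermitianForm B) (hL : IsEisModule L)
    {w : V} (hρ : ρ ∈ L) (hw : w ∈ L) (hnull : B ρ ρ = 0) (hww : B w w = 0) (hρw : B ρ w = θ) :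
    ∀ x ∈ L, ∃ a ∈ Eis, ∃ b ∈ Eis, ∃ z ∈ L,
      B z ρ = 0 ∧ B z w = 0 ∧ x = a • ρ + b • w + z := by
  intro x hx
  have hwρ : B w ρ = -θ := by rw [hB.conj_symm, hρw, conj_θ]
  obtain ⟨b, hb, hxρ⟩ := exists_B_eq_θ_mul hdual hB hx hρ
  obtain ⟨a, ha, hxw⟩ := exists_B_eq_θ_mul hdual hB hx hw
  refine ⟨a, ha, -b, neg_mem hb, x - a • ρ - (-b) • w,
    hL.sub_mem (hL.sub_mem hx (hL.smul_mem ha hρ)) (hL.smul_mem (neg_mem hb) hw), ?_, ?_, ?_⟩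
  · rw [hB.sub_left, hB.sub_left, hB.smul_left, hB.smul_left, hxρ, hnull, hwρ]; ring
  · rw [hB.sub_left, hB.sub_left, hB.smul_left, hB.smul_left, hxw, hρw, hww]; ring
  · abel

end Lattice

theorem stmt11_general {V : Type*} [AddCommGroup V] [Module ℂ V]
    (B : V → V → ℂ)
    (hBadd : ∀ x y z : V, B (x + y) z = B x z + B y z)
    (hBsmul : ∀ (c : ℂ) (x y : V), B (c • x) y = c * B x y)
    (hherm : ∀ x y : V, B y x = (starRingEnd ℂ) (B x y))
    (L : Set V)
    (h0 : (0 : V) ∈ L)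
    (hadd : ∀ x ∈ L, ∀ y ∈ L, x + y ∈ L)
    (hneg : ∀ x ∈ L, -x ∈ L)
    (hω : ∀ x ∈ L, ω • x ∈ L)
    (hnd : ∀ v : V, (∀ x ∈ L, B x v = 0) → v = 0)
    (hdual : L = {z | ∃ v : V, (∀ x ∈ L, B x v ∈ Eis) ∧ z = θ • v})
    (ρ : V) (hρ : ρ ∈ L) (hnull : B ρ ρ = 0)
    (hprim : ∀ α ∈ Eis, ∀ v ∈ L, ρ = α • v → ∃ β ∈ Eis, α * β = 1) :
    ∃ w ∈ L, B ρ w = θ ∧ B w w = 0 ∧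
      ∀ x ∈ L, ∃ a ∈ Eis, ∃ b ∈ Eis, ∃ z ∈ L,
        B z ρ = 0 ∧ B z w = 0 ∧ x = a • ρ + b • w + z := by
  have hB : IsHermitianForm B := ⟨hBadd, hBsmul, hherm⟩
  have hL : IsEisModule L := ⟨h0, hadd, hneg, hω⟩
  obtain ⟨w₁, hw₁, hρw₁⟩ := exists_B_eq_θ hdual hB hL hnd hρ hprim
  obtain ⟨w, hw, hρw, hww⟩ := exists_isotropic_B_eq_θ hdual hB hL hρ hnull hw₁ hρw₁
  exact ⟨w, hw, hρw, hww,
    exists_eq_smul_add_smul_add_orthogonal hdual hB hL hρ hw hnull hww hρw⟩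

/-- If `L` is a nondegenerate Eisenstein lattice with `L = θL'` and `ρ ∈ L` is a
primitive null vector, then there is `w ∈ L` with `⟨ρ,w⟩ = θ`, `⟨w,w⟩ = 0`, and
`span_Eis(ρ,w)` is an orthogonal direct summand of `L` (isometric to `Eis²` with
Gram matrix `[[0,θ],[θ̄,0]]`). -/
theorem stmt11 {V : Type*} [AddCommGroup V] [Module ℂ V]
    (B : V → V → ℂ)
    (hBadd : ∀ x y z : V, B (x + y) z = B x z + B y z)
    (hBsmul : ∀ (c : ℂ) (x y : V), B (c • x) y = c * B x y)
    (hherm : ∀ x y : V, B y x = (starRingEnd ℂ) (B x y))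
    (L : Set V)
    (h0 : (0 : V) ∈ L)
    (hadd : ∀ x ∈ L, ∀ y ∈ L, x + y ∈ L)
    (hneg : ∀ x ∈ L, -x ∈ L)
    (hω : ∀ x ∈ L, ω • x ∈ L)
    (hspan : Submodule.span ℂ L = ⊤)
    (hnd : ∀ v : V, (∀ x ∈ L, B x v = 0) → v = 0)
    (hdual : L = {z | ∃ v : V, (∀ x ∈ L, B x v ∈ Eis) ∧ z = θ • v})
    (ρ : V) (hρ : ρ ∈ L) (hnull : B ρ ρ = 0)
    (hprim : ∀ α ∈ Eis, ∀ v ∈ L, ρ = α • v → ∃ β ∈ Eis, α * β = 1) :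
    ∃ w ∈ L, B ρ w = θ ∧ B w w = 0 ∧
      ∀ x ∈ L, ∃ a ∈ Eis, ∃ b ∈ Eis, ∃ z ∈ L,
        B z ρ = 0 ∧ B z w = 0 ∧ x = a • ρ + b • w + z :=
  stmt11_general B hBadd hBsmul hherm L h0 hadd hneg hω hnd hdual ρ hρ hnull hprim
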